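/- Let t be a normal λμ-term, σ = [(a_i:=*y)_{1≤i≤n}] for a λ-variable y, and τ the normal form of tσ. Then tσ reduces to τ using only y-redexes, i.e. only β-redexes of the form (λz.u y) and μ-redexes of the form (μb.u y). -/

import Mathlib

/-- λμ-terms: λ-variables, λ-abstraction, application, μ-abstraction, naming (a t). -/
inductive Trm : Type
  | var  : ℕ → Trm
  | lam  : ℕ → Trm → Trm
  | app  : Trm → Trm → Trm
  | mu   : ℕ → Trm → Trm
  | name : ℕ → Trm → Trm
deriving DecidableEq

/-- substitution of a λ-variable: t[x:=v] (respecting shadowing). -/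
def subst (x : ℕ) (v : Trm) : Trm → Trm
  | .var y => if y = x then v else .var y
  | .lam y t => .lam y (if y = x then t else subst x v t)
  | .app t u => .app (subst x v t) (subst x v u)
  | .mu b t => .mu b (subst x v t)
  | .name b t => .name b (subst x v t)

/-- μ-substitution t[a:=*v]: replace inductively each subterm (a w) by (a (w v)). -/
def msubst (a : ℕ) (v : Trm) : Trm → Trm
  | .var y => .var y
  | .lam y t => .lam y (msubst a v t)
  | .app t u => .app (msubst a v t) (msubst a v u)
  | .mu b t => .mu b (if b = a then t else msubst a v t)
  | .name b t =>
      if b = a then .name b (.app (msubst a v t) v) else .name b (msubst a v t)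

/-- One-step β and μ reduction, closed under all contexts. -/
inductive Red : Trm → Trm → Prop
  | beta (x : ℕ) (u v : Trm) : Red (.app (.lam x u) v) (subst x v u)
  | muR  (a : ℕ) (u v : Trm) : Red (.app (.mu a u) v) (.mu a (msubst a v u))
  | appL {t t'} (u : Trm) : Red t t' → Red (.app t u) (.app t' u)
  | appR (t : Trm) {u u'} : Red u u' → Red (.app t u) (.app t u')
  | lamC (x : ℕ) {t t'} : Red t t' → Red (.lam x t) (.lam x t')
  | muC  (a : ℕ) {t t'} : Red t t' → Red (.mu a t) (.mu a t')
  | nameC (a : ℕ) {t t'} : Red t t' → Red (.name a t) (.name a t')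

/-- Reflexive transitive closure of one-step reduction. -/
def Reds : Trm → Trm → Prop := Relation.ReflTransGen Red
/-- A normal term: no β or μ redex. -/
def NormalForm (t : Trm) : Prop := ∀ u, ¬ Red t u

/-- A normalizable term: it reduces to a normal form. -/
def Normalizable (t : Trm) : Prop := ∃ n, Reds t n ∧ NormalForm n
/-- One-step reduction contracting only a redex whose argument is the
λ-variable y: a β-redex (λz.u y) or a μ-redex (μb.u y). -/
inductive RedY (y : ℕ) : Trm → Trm → Prop
  | beta (x : ℕ) (u : Trm) : RedY y (.app (.lam x u) (.var y)) (subst x (.var y) u)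
  | muR  (a : ℕ) (u : Trm) : RedY y (.app (.mu a u) (.var y)) (.mu a (msubst a (.var y) u))
  | appL {t t'} (u : Trm) : RedY y t t' → RedY y (.app t u) (.app t' u)
  | appR (t : Trm) {u u'} : RedY y u u' → RedY y (.app t u) (.app t u')
  | lamC (x : ℕ) {t t'} : RedY y t t' → RedY y (.lam x t) (.lam x t')
  | muC  (a : ℕ) {t t'} : RedY y t t' → RedY y (.mu a t) (.mu a t')
  | nameC (a : ℕ) {t t'} : RedY y t t' → RedY y (.name a t) (.name a t')

/-- The substitution [(aᵢ:=*y)] over a finite set of μ-variables: each subterm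
(a u) with a ∈ as is replaced by (a (u y)). -/
def msubstS (as : Finset ℕ) (y : ℕ) : Trm → Trm
  | .var z => .var z
  | .lam z t => .lam z (msubstS as y t)
  | .app t u => .app (msubstS as y t) (msubstS as y u)
  | .mu b t => .mu b (msubstS (as.erase b) y t)
  | .name b t =>
      if b ∈ as then .name b (.app (msubstS as y t) (.var y))
      else .name b (msubstS as y t)


/-! Call a term neutral if its head is a λ-variable or a naming; no reduct of a neutral term
is an abstraction. The invariant `YSafe y` asks that every application whose operator is not
neutral have argument `y`. For normal `t` the term `msubstS as y t` satisfies it: the operators of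
applications in a normal term are neutral, and the substitution only adds applications `(u y)`.
The invariant survives reduction, since substituting `y` for a λ-variable or `[a:=*y]` preserves
it, and in a term satisfying it every redex is a `y`-redex. -/

def Neutral : Trm → Prop
  | .var _ | .name _ _ => True
  | .app f _ => Neutral f
  | .lam _ _ | .mu _ _ => False

def YSafe (y : ℕ) : Trm → Prop
  | .var _ => True
  | .lam _ t | .mu _ t | .name _ t => YSafe y t
  | .app f g => YSafe y f ∧ YSafe y g ∧ (Neutral f ∨ g = .var y)

theorem neutral_subst {t : Trm} (x : ℕ) {v : Trm} (hv : Neutral v) (ht : Neutral t) :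
    Neutral (subst x v t) := by
  induction t with
  | var z => unfold subst; split <;> trivial
  | app f g ihf => exact ihf ht
  | name => trivial
  | lam | mu => exact False.elim ht

theorem neutral_msubst {t : Trm} (a : ℕ) (v : Trm) (ht : Neutral t) :
    Neutral (msubst a v t) := by
  induction t with
  | app f g ihf => exact ihf ht
  | name b => unfold msubst; split <;> trivial
  | var => trivial
  | lam | mu => exact False.elim ht

theorem neutral_msubstS {t : Trm} (as : Finset ℕ) (y : ℕ) (ht : Neutral t) :
    Neutral (msubstS as y t) := by
  induction t with
  | app f g ihf => exact ihf ht
  | name b => unfold msubstS; split <;> trivial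
  | var => trivial
  | lam | mu => exact False.elim ht

theorem ySafe_subst {y : ℕ} {t : Trm} (x : ℕ) (ht : YSafe y t) :
    YSafe y (subst x (.var y) t) := by
  induction t with
  | var z => unfold subst; split <;> trivial
  | lam z t ih =>
    unfold subst
    split
    · exact ht
    · exact ih ht
  | app f g ihf ihg =>
    obtain ⟨hf, hg, hfg⟩ := ht
    refine ⟨ihf hf, ihg hg, ?_⟩
    rcases hfg with hf | rfl
    · exact .inl (neutral_subst x trivial hf)
    · right; unfold subst; split <;> rfl
  | mu b t ih | name b t ih => exact ih ht

theorem ySafe_msubst {y : ℕ} {t : Trm} (a : ℕ) (ht : YSafe y t) :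
    YSafe y (msubst a (.var y) t) := by
  induction t with
  | var => trivial
  | lam z t ih => exact ih ht
  | app f g ihf ihg =>
    obtain ⟨hf, hg, hfg⟩ := ht
    refine ⟨ihf hf, ihg hg, ?_⟩
    rcases hfg with hf | rfl
    · exact .inl (neutral_msubst a _ hf)
    · exact .inr rfl
  | mu b t ih =>
    unfold msubst
    split
    · exact ht
    · exact ih ht
  | name b t ih =>
    unfold msubst
    split
    · exact ⟨ih ht, trivial, .inr rfl⟩
    · exact ih ht

theorem Red.neutral {t t' : Trm} (h : Red t t') (ht : Neutral t) : Neutral t' := by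
  induction h with
  | beta | muR | lamC | muC => exact False.elim ht
  | appL u _ ih => exact ih ht
  | appR | nameC => exact ht

theorem Red.ySafe {y : ℕ} {t t' : Trm} (h : Red t t') (ht : YSafe y t) : YSafe y t' := by
  induction h with
  | beta x u v =>
    obtain ⟨hu, -, hv | rfl⟩ := ht
    · exact False.elim hv
    · exact ySafe_subst x hu
  | muR a u v =>
    obtain ⟨hu, -, hv | rfl⟩ := ht
    · exact False.elim hv
    · exact ySafe_msubst a hu
  | appL u hr ih =>
    obtain ⟨hf, hg, hfg⟩ := ht
    exact ⟨ih hf, hg, hfg.imp_left hr.neutral⟩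
  | appR t hr ih =>
    obtain ⟨hf, hg, hfg | rfl⟩ := ht
    · exact ⟨hf, ih hg, .inl hfg⟩
    · cases hr
  | lamC _ _ ih | muC _ _ ih | nameC _ _ ih => exact ih ht

theorem Red.redY_of_ySafe {y : ℕ} {t t' : Trm} (h : Red t t') (ht : YSafe y t) :
    RedY y t t' := by
  induction h with
  | beta x u v =>
    obtain ⟨-, -, hv | rfl⟩ := ht
    · exact False.elim hv
    · exact .beta x u
  | muR a u v =>
    obtain ⟨-, -, hv | rfl⟩ := ht
    · exact False.elim hv
    · exact .muR a u
  | appL u _ ih => exact .appL u (ih ht.1)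
  | appR t _ ih => exact .appR t (ih ht.2.1)
  | lamC x _ ih => exact .lamC x (ih ht)
  | muC a _ ih => exact .muC a (ih ht)
  | nameC a _ ih => exact .nameC a (ih ht)

theorem Reds.redsY_of_ySafe {y : ℕ} {t t' : Trm} (h : Reds t t') (ht : YSafe y t) :
    Relation.ReflTransGen (RedY y) t t' := by
  induction h using Relation.ReflTransGen.head_induction_on with
  | refl => exact .refl
  | head hstep _ ih => exact .head (hstep.redY_of_ySafe ht) (ih (hstep.ySafe ht))

theorem NormalForm.neutral_of_app {f g : Trm} (h : NormalForm (.app f g)) : Neutral f := by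
  induction f generalizing g with
  | var | name => trivial
  | lam x u => exact h _ (.beta x u g)
  | mu a u => exact h _ (.muR a u g)
  | app f₁ f₂ ih => exact ih fun v hv => h _ (.appL g hv)

theorem NormalForm.ySafe_msubstS {t : Trm} (as : Finset ℕ) (y : ℕ) (ht : NormalForm t) :
    YSafe y (msubstS as y t) := by
  induction t generalizing as with
  | var => trivial
  | lam x u ih => exact ih as fun v hv => ht _ (.lamC x hv)
  | mu b u ih => exact ih _ fun v hv => ht _ (.muC b hv)
  | app f g ihf ihg =>
    exact ⟨ihf as fun v hv => ht _ (.appL g hv), ihg as fun v hv => ht _ (.appR f hv),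
      .inl (neutral_msubstS as y ht.neutral_of_app)⟩
  | name b u ih =>
    have hu := ih as fun v hv => ht _ (.nameC b hv)
    unfold msubstS
    split
    · exact ⟨hu, trivial, .inr rfl⟩
    · exact hu

theorem msubstS_reds_y_general (t τ : Trm) (y : ℕ) (as : Finset ℕ)
    (ht : NormalForm t) (hred : Reds (msubstS as y t) τ) :
    Relation.ReflTransGen (RedY y) (msubstS as y t) τ :=
  hred.redsY_of_ySafe (ht.ySafe_msubstS as y)

/-- If t is normal and τ is the normal form of tσ with σ = [(aᵢ:=*y)], then
tσ reduces to τ using only y-redexes. -/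
theorem msubstS_reds_y (t τ : Trm) (y : ℕ) (as : Finset ℕ)
    (ht : NormalForm t) (hτ : NormalForm τ) (hred : Reds (msubstS as y t) τ) :
    Relation.ReflTransGen (RedY y) (msubstS as y t) τ :=
  msubstS_reds_y_general t τ y as ht hred
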